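/- arXiv:0710.3003 — 2 statements merged into one kernel-verified Lean document; each statement's English description precedes it below -/
import Mathlib

section
/- Let f : ℤ → ℤ be ℤ-convex on the integer interval [l,u], with m = ⌊(l+u)/2⌋ and l ≤ m-1, m+1 ≤ u. If f(m-1) < f(m), then min{f(α) : l ≤ α ≤ u, α ∈ ℤ} = min{f(α) : l ≤ α ≤ m, α ∈ ℤ}. -/
/-- A function `f : ℤ → ℤ` is ℤ-convex if for all `x, y ∈ ℤ` and `0 ≤ λ ≤ 1` with
`λx + (1-λ)y ∈ ℤ`, we have `f(λx+(1-λ)y) ≤ λ f(x) + (1-λ) f(y)`. -/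
def ZConvex (f : ℤ → ℤ) : Prop :=
  ∀ (x y z : ℤ) (lam : ℚ), 0 ≤ lam → lam ≤ 1 →
    (z : ℚ) = lam * x + (1 - lam) * y →
    (f z : ℚ) ≤ lam * f x + (1 - lam) * f y

/-!
Writing `m = λ (m - 1) + (1 - λ) α` for `α > m`, ℤ-convexity together with `f (m - 1) < f m`
forces `f m ≤ f α`. Hence on `[m, u]` the minimum is attained at `m`, which already lies in
`[l, m]`, and the part of the interval to the right of `m` does not lower the infimum.
-/

namespace ZConvex

variable {f : ℤ → ℤ}

theorem mul_le_add_mul (hf : ZConvex f) {x y z : ℤ} (hxy : x ≤ y) (hyz : y ≤ z) :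
    (z - x) * f y ≤ (z - y) * f x + (y - x) * f z := by
  rcases hxy.eq_or_lt with rfl | hxy
  · simp
  have hzx : (0 : ℚ) < z - x := by rw [sub_pos]; exact_mod_cast hxy.trans_le hyz
  have hyz' : (y : ℚ) ≤ z := by exact_mod_cast hyz
  have hxy' : (x : ℚ) ≤ y := by exact_mod_cast hxy.le
  have hconv := hf x z y ((z - y) / (z - x)) (div_nonneg (by linarith) hzx.le)
    (div_le_one_of_le₀ (by linarith) hzx.le) (by field_simp; ring)
  have hscaled : ((z - x : ℤ) : ℚ) * f y ≤ ((z - y) * f x + (y - x) * f z : ℤ) := by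
    push_cast
    calc ((z : ℚ) - x) * f y
        ≤ (z - x) * ((z - y) / (z - x) * f x + (1 - (z - y) / (z - x)) * f z) :=
          mul_le_mul_of_nonneg_left hconv hzx.le
      _ = (z - y) * f x + (y - x) * f z := by field_simp; ring
  exact_mod_cast hscaled

theorem le_of_le_of_lt (hf : ZConvex f) {x y z : ℤ} (hxy : x < y) (hyz : y < z)
    (h : f x ≤ f y) : f y ≤ f z := by
  have := hf.mul_le_add_mul hxy.le hyz.le
  have : (y - x) * f y ≤ (y - x) * f z := by nlinarith
  exact le_of_mul_le_mul_left this (sub_pos.mpr hxy)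

theorem apply_le_of_apply_sub_one_le (hf : ZConvex f) {m : ℤ} (h : f (m - 1) ≤ f m) {α : ℤ}
    (hα : m ≤ α) : f m ≤ f α := by
  rcases hα.eq_or_lt with rfl | hα
  · rfl
  · exact hf.le_of_le_of_lt (sub_one_lt m) hα h

end ZConvex

theorem csInf_image_Icc_eq_of_forall_le {α β : Type*} [LinearOrder α] [LocallyFiniteOrder α]
    [ConditionallyCompleteLinearOrder β] {f : α → β} {l m u : α} (hlm : l ≤ m) (hmu : m ≤ u)
    (hmin : ∀ a ∈ Set.Icc m u, f m ≤ f a) :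
    sInf (f '' Set.Icc l u) = sInf (f '' Set.Icc l m) := by
  have hright : sInf (f '' Set.Icc m u) = f m :=
    (IsLeast.csInf_eq ⟨Set.mem_image_of_mem f (Set.left_mem_Icc.mpr hmu),
      Set.forall_mem_image.mpr hmin⟩)
  have hleft : sInf (f '' Set.Icc l m) ≤ f m :=
    csInf_le ((Set.finite_Icc l m).image f).bddBelow
      (Set.mem_image_of_mem f (Set.right_mem_Icc.mpr hlm))
  rw [← Set.Icc_union_Icc_eq_Icc hlm hmu, Set.image_union,
    csInf_union ((Set.finite_Icc l m).image f).bddBelow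
      ((Set.nonempty_Icc.mpr hlm).image f) ((Set.finite_Icc m u).image f).bddBelow
      ((Set.nonempty_Icc.mpr hmu).image f), hright, inf_eq_left.mpr hleft]

theorem bisection_left_case_general (f : ℤ → ℤ) (hf : ZConvex f) (l u m : ℤ)
    (h1 : l ≤ m - 1) (h2 : m + 1 ≤ u)
    (hlt : f (m - 1) < f m) :
    sInf (f '' Set.Icc l u) = sInf (f '' Set.Icc l m) :=
  csInf_image_Icc_eq_of_forall_le (by omega) (by omega)
    fun _ hα => hf.apply_le_of_apply_sub_one_le hlt.le hα.1

/-- If `f` is ℤ-convex, `m = ⌊(l+u)/2⌋`, `l ≤ m-1`, `m+1 ≤ u`, and `f(m-1) < f(m)`, then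
`min {f(α) : l ≤ α ≤ u} = min {f(α) : l ≤ α ≤ m}`. -/
theorem bisection_left_case (f : ℤ → ℤ) (hf : ZConvex f) (l u m : ℤ)
    (hm : m = (l + u) / 2) (h1 : l ≤ m - 1) (h2 : m + 1 ≤ u)
    (hlt : f (m - 1) < f m) :
    sInf (f '' Set.Icc l u) = sInf (f '' Set.Icc l m) :=
  bisection_left_case_general f hf l u m h1 h2 hlt
end

section
/- Let g : ℤ → ℤ be ℤ-convex, and let x ∈ ℤ and d₁, …, d_t ∈ ℤ all have the same sign (all ≥ 0 or all ≤ 0), with y = x + Σ d_i. Then g(y) - g(x) ≥ Σ_{i=1}^t [g(x + d_i) - g(x)]. (Superadditivity of convex increments in a common direction.) -/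
theorem ZConvex.monotone_sub_succ {g : ℤ → ℤ} (hg : ZConvex g) :
    Monotone fun k => g (k + 1) - g k := by
  refine monotone_int_of_le_succ fun k => ?_
  have hmid : (2 * g (k + 1) : ℚ) ≤ g k + g (k + 1 + 1) := by
    linarith [hg k (k + 1 + 1) (k + 1) (1 / 2) (by norm_num) (by norm_num) (by push_cast; ring)]
  have hmidℤ : 2 * g (k + 1) ≤ g k + g (k + 1 + 1) := by exact_mod_cast hmid
  linarith

section MonotoneDifferences

variable {g : ℤ → ℤ}

theorem Monotone.sub_succ_comp_neg (hΔ : Monotone fun k => g (k + 1) - g k) :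
    Monotone fun k => g (-(k + 1)) - g (-k) := by
  intro a b hab
  have hstep := hΔ (show -(b + 1) ≤ -(a + 1) by omega)
  dsimp only at hstep ⊢
  rw [show -(b + 1) + 1 = -b by ring, show -(a + 1) + 1 = -a by ring] at hstep
  linarith

theorem sub_le_sub_of_monotone_sub_succ (hΔ : Monotone fun k => g (k + 1) - g k)
    {u v e : ℤ} (huv : u ≤ v) (he : 0 ≤ e) :
    g (u + e) - g u ≤ g (v + e) - g v := by
  lift e to ℕ using he
  induction e with
  | zero => simp
  | succ n ih =>
    have hstep := hΔ (show u + n ≤ v + n by omega)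
    simp only [Nat.cast_succ, ← add_assoc] at hstep ⊢
    linarith

theorem sum_sub_le_sub_sum_of_nonneg (hΔ : Monotone fun k => g (k + 1) - g k)
    {ι : Type*} (x : ℤ) (s : Finset ι) (d : ι → ℤ) (hd : ∀ i ∈ s, 0 ≤ d i) :
    ∑ i ∈ s, (g (x + d i) - g x) ≤ g (x + ∑ i ∈ s, d i) - g x := by
  classical
  induction s using Finset.induction_on with
  | empty => simp
  | insert a s ha ih =>
    rw [Finset.forall_mem_insert] at hd
    have hS : 0 ≤ ∑ i ∈ s, d i := Finset.sum_nonneg hd.2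
    have hstep := sub_le_sub_of_monotone_sub_succ hΔ (le_add_of_nonneg_right (a := x) hS) hd.1
    rw [Finset.sum_insert ha, Finset.sum_insert ha, add_comm (d a), ← add_assoc]
    linarith [ih hd.2]

theorem sum_sub_le_sub_sum_of_nonpos (hΔ : Monotone fun k => g (k + 1) - g k)
    {ι : Type*} (x : ℤ) (s : Finset ι) (d : ι → ℤ) (hd : ∀ i ∈ s, d i ≤ 0) :
    ∑ i ∈ s, (g (x + d i) - g x) ≤ g (x + ∑ i ∈ s, d i) - g x := by
  have hreflected := sum_sub_le_sub_sum_of_nonneg (g := fun k => g (-k)) hΔ.sub_succ_comp_neg (-x) s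
    (fun i => -d i) fun i hi => neg_nonneg.2 (hd i hi)
  simpa only [← neg_add, neg_neg, Finset.sum_neg_distrib] using hreflected

end MonotoneDifferences

/-- Superadditivity of convex increments in a common direction: if `g` is ℤ-convex and
`d₁, …, d_t` all have the same sign, with `y = x + Σ dᵢ`, then
`g(y) - g(x) ≥ Σᵢ [g(x + dᵢ) - g(x)]`. -/
theorem Zconvex_superadditive_increments (g : ℤ → ℤ) (hg : ZConvex g)
    (x : ℤ) (t : ℕ) (d : Fin t → ℤ)
    (hsign : (∀ i, 0 ≤ d i) ∨ (∀ i, d i ≤ 0))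
    (y : ℤ) (hy : y = x + ∑ i, d i) :
    ∑ i, (g (x + d i) - g x) ≤ g y - g x := by
  subst hy
  rcases hsign with hd | hd
  · exact sum_sub_le_sub_sum_of_nonneg hg.monotone_sub_succ x _ d fun i _ => hd i
  · exact sum_sub_le_sub_sum_of_nonpos hg.monotone_sub_succ x _ d fun i _ => hd i
end
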